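/- Let H : (0, t₀] → ℝ be a function such that (i) (1/T)∫₀ᵀ H(t) dt → ℓ as T → 0⁺, and (ii) there exists M > 0 with H(t) − H(s) ≤ M(t−s)/s for all 0 < s < t ≤ t₀. Then lim_{t→0⁺} H(t) = ℓ. -/

import Mathlib

open Filter

private lemma avg_upper (H : ℝ → ℝ) (t₀ : ℝ) (M : ℝ) (hM : 0 ≤ M)
    (hint : IntervalIntegrable H MeasureTheory.volume 0 t₀)
    (hosc : ∀ s t : ℝ, 0 < s → s < t → t ≤ t₀ → H t - H s ≤ M * (t - s) / s)
    (a b : ℝ) (ha : 0 < a) (hab : a < b) (hb : b ≤ t₀) :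
    (∫ u in a..b, H u) ≤ (b - a) * (H a + M * (b - a) / a) := by
  have hiab : IntervalIntegrable H MeasureTheory.volume a b := by
    apply hint.mono_set
    rw [Set.uIcc_of_le hab.le, Set.uIcc_of_le ((ha.trans (hab.trans_le hb)).le)]
    exact Set.Icc_subset_Icc ha.le hb
  have hc : (∫ u in a..b, (H a + M * (b - a) / a)) = (b - a) * (H a + M * (b - a) / a) := by
    rw [intervalIntegral.integral_const, smul_eq_mul]
  rw [← hc]
  apply intervalIntegral.integral_mono_on hab.le hiab (intervalIntegrable_const)
  intro u hu
  rcases eq_or_lt_of_le hu.1 with h | h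
  · have : 0 ≤ M * (b - a) / a := div_nonneg (mul_nonneg hM (by linarith)) ha.le
    rw [← h]; linarith
  · have h1 := hosc a u ha h (hu.2.trans hb)
    have h2 : M * (u - a) / a ≤ M * (b - a) / a := by
      apply (div_le_div_iff_of_pos_right ha).mpr
      nlinarith [hu.2]
    linarith

private lemma avg_lower (H : ℝ → ℝ) (t₀ : ℝ) (M : ℝ) (hM : 0 ≤ M)
    (hint : IntervalIntegrable H MeasureTheory.volume 0 t₀)
    (hosc : ∀ s t : ℝ, 0 < s → s < t → t ≤ t₀ → H t - H s ≤ M * (t - s) / s)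
    (a b : ℝ) (ha : 0 < a) (hab : a < b) (hb : b ≤ t₀) :
    (b - a) * (H b - M * (b - a) / a) ≤ ∫ u in a..b, H u := by
  have hiab : IntervalIntegrable H MeasureTheory.volume a b := by
    apply hint.mono_set
    rw [Set.uIcc_of_le hab.le, Set.uIcc_of_le ((ha.trans (hab.trans_le hb)).le)]
    exact Set.Icc_subset_Icc ha.le hb
  have hc : (∫ u in a..b, (H b - M * (b - a) / a)) = (b - a) * (H b - M * (b - a) / a) := by
    rw [intervalIntegral.integral_const, smul_eq_mul]
  rw [← hc]
  apply intervalIntegral.integral_mono_on hab.le (intervalIntegrable_const) hiab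
  intro u hu
  rcases eq_or_lt_of_le hu.2 with h | h
  · have : 0 ≤ M * (b - a) / a := div_nonneg (mul_nonneg hM (by linarith)) ha.le
    rw [h]; linarith
  · have hu0 : 0 < u := lt_of_lt_of_le ha hu.1
    have h1 := hosc u b hu0 h hb
    have h2 : M * (b - u) / u ≤ M * (b - a) / a := by
      rw [mul_div_assoc, mul_div_assoc]
      exact mul_le_mul_of_nonneg_left (div_le_div₀ (by linarith) (by linarith [hu.1]) ha hu.1) hM
    linarith

/-- Tauberian theorem: if the Cesàro averages of H converge to ℓ as T → 0⁺
and H(t) − H(s) ≤ M(t−s)/s for 0 < s < t ≤ t₀, then H(t) → ℓ as t → 0⁺. -/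
theorem stmt_15 (H : ℝ → ℝ) (t₀ : ℝ) (ht₀ : 0 < t₀) (ℓ : ℝ)
    (hint : IntervalIntegrable H MeasureTheory.volume 0 t₀)
    (hces : Tendsto (fun T => T⁻¹ * ∫ t in (0:ℝ)..T, H t)
      (nhdsWithin 0 (Set.Ioi 0)) (nhds ℓ))
    (M : ℝ) (hM : 0 < M)
    (hosc : ∀ s t : ℝ, 0 < s → s < t → t ≤ t₀ → H t - H s ≤ M * (t - s) / s) :
    Tendsto H (nhdsWithin 0 (Set.Ioi 0)) (nhds ℓ) := by
  set A : ℝ → ℝ := fun T => T⁻¹ * ∫ t in (0:ℝ)..T, H t with hA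
  have hint_sub : ∀ c : ℝ, 0 ≤ c → c ≤ t₀ → IntervalIntegrable H MeasureTheory.volume 0 c := by
    intro c hc0 hc1
    apply hint.mono_set
    rw [Set.uIcc_of_le hc0, Set.uIcc_of_le ht₀.le]
    exact Set.Icc_subset_Icc le_rfl hc1
  -- scaling maps
  have hmul : ∀ c : ℝ, 0 < c → Tendsto (fun t : ℝ => c * t)
      (nhdsWithin 0 (Set.Ioi 0)) (nhdsWithin 0 (Set.Ioi 0)) := by
    intro c hc
    apply tendsto_nhdsWithin_of_tendsto_nhds_of_eventually_within
    · have h0 : Tendsto (fun t : ℝ => c * t) (nhds 0) (nhds (c * 0)) :=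
        tendsto_const_nhds.mul tendsto_id
      rw [mul_zero] at h0
      exact h0.mono_left nhdsWithin_le_nhds
    · filter_upwards [self_mem_nhdsWithin] with t ht
      exact mul_pos hc ht
  rw [Metric.tendsto_nhds]
  intro ε hε
  set δ : ℝ := min (1/2) (ε / (4 * M)) with hδ
  have hδ0 : 0 < δ := lt_min (by norm_num) (by positivity)
  have hδh : δ ≤ 1/2 := min_le_left _ _
  have hδ1 : δ < 1 := lt_of_le_of_lt hδh (by norm_num)
  have hδM : M * δ ≤ ε / 4 := by
    have : δ ≤ ε / (4 * M) := min_le_right _ _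
    calc M * δ ≤ M * (ε / (4 * M)) := by nlinarith
      _ = ε / 4 := by field_simp
  have h1δ : (0:ℝ) < 1 + δ := by linarith
  have h1δ' : (0:ℝ) < 1 - δ := by linarith
  -- upper comparison function tends to ℓ
  have hGup : Tendsto (fun t : ℝ => δ⁻¹ * ((1 + δ) * A ((1 + δ) * t) - A t))
      (nhdsWithin 0 (Set.Ioi 0)) (nhds ℓ) := by
    have h1 : Tendsto (fun t : ℝ => A ((1 + δ) * t)) (nhdsWithin 0 (Set.Ioi 0)) (nhds ℓ) :=
      hces.comp (hmul _ h1δ)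
    have h2 := ((h1.const_mul (1 + δ)).sub hces).const_mul δ⁻¹
    have he : δ⁻¹ * ((1 + δ) * ℓ - ℓ) = ℓ := by field_simp; ring
    rwa [he] at h2
  have hGlo : Tendsto (fun t : ℝ => δ⁻¹ * (A t - (1 - δ) * A ((1 - δ) * t)))
      (nhdsWithin 0 (Set.Ioi 0)) (nhds ℓ) := by
    have h1 : Tendsto (fun t : ℝ => A ((1 - δ) * t)) (nhdsWithin 0 (Set.Ioi 0)) (nhds ℓ) :=
      hces.comp (hmul _ h1δ')
    have h2 := (hces.sub (h1.const_mul (1 - δ))).const_mul δ⁻¹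
    have he : δ⁻¹ * (ℓ - (1 - δ) * ℓ) = ℓ := by field_simp; ring
    rwa [he] at h2
  have hoo : Set.Ioo (0:ℝ) (t₀ / (1 + δ)) ∈ nhdsWithin (0:ℝ) (Set.Ioi 0) :=
    Ioo_mem_nhdsGT_of_mem (by constructor <;> [rfl; positivity])
  filter_upwards [hoo, hGup.eventually (Metric.ball_mem_nhds ℓ (by positivity : (0:ℝ) < ε/2)),
    hGlo.eventually (Metric.ball_mem_nhds ℓ (by positivity : (0:ℝ) < ε/2))]
    with t ht hup hlo
  obtain ⟨ht0, ht1⟩ := ht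
  have htt₀ : (1 + δ) * t ≤ t₀ := by
    rw [← le_div_iff₀' h1δ]; exact ht1.le
  have htle : t ≤ t₀ := le_trans (by nlinarith) htt₀
  -- identify comparison functions with averages over small intervals
  have i0t := hint_sub t ht0.le htle
  have i0t' := hint_sub ((1 + δ) * t) (by positivity) htt₀
  have i0t'' := hint_sub ((1 - δ) * t) (by positivity) (le_trans (by nlinarith) htle)
  have eqa : (∫ u in t..((1 + δ) * t), H u) =
      (∫ u in (0:ℝ)..((1 + δ) * t), H u) - ∫ u in (0:ℝ)..t, H u :=
    (intervalIntegral.integral_interval_sub_left i0t' i0t).symm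
  have eqb : (∫ u in ((1 - δ) * t)..t, H u) =
      (∫ u in (0:ℝ)..t, H u) - ∫ u in (0:ℝ)..((1 - δ) * t), H u :=
    (intervalIntegral.integral_interval_sub_left i0t i0t'').symm
  have hne : t ≠ 0 := ne_of_gt ht0
  have keyup : δ⁻¹ * ((1 + δ) * A ((1 + δ) * t) - A t) =
      (∫ u in t..((1 + δ) * t), H u) / (δ * t) := by
    rw [eqa, hA]
    field_simp
  have keylo : δ⁻¹ * (A t - (1 - δ) * A ((1 - δ) * t)) =
      (∫ u in ((1 - δ) * t)..t, H u) / (δ * t) := by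
    rw [eqb, hA]
    field_simp
  rw [keyup] at hup
  rw [keylo] at hlo
  rw [Real.dist_eq] at hup hlo ⊢
  -- inequality 1: H t ≥ average over [t, (1+δ)t] − Mδ
  have hub := avg_upper H t₀ M hM.le hint hosc t ((1 + δ) * t) ht0 (by nlinarith) htt₀
  have hlb := avg_lower H t₀ M hM.le hint hosc ((1 - δ) * t) t (by positivity) (by nlinarith) htle
  have e1 : (1 + δ) * t - t = δ * t := by ring
  have e2 : t - (1 - δ) * t = δ * t := by ring
  rw [e1] at hub
  rw [e2] at hlb
  have eδt : M * (δ * t) / t = M * δ := by field_simp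
  have eδt' : M * (δ * t) / ((1 - δ) * t) = M * δ / (1 - δ) := by
    rw [mul_comm (1 - δ) t, ← div_div, mul_div_assoc]
    field_simp
  rw [eδt] at hub
  rw [eδt'] at hlb
  have hδt : (0:ℝ) < δ * t := by positivity
  -- from hub: (∫ t..(1+δ)t H)/(δt) ≤ H t + Mδ
  have hub' : (∫ u in t..((1 + δ) * t), H u) / (δ * t) ≤ H t + M * δ := by
    rw [div_le_iff₀ hδt]
    linarith [hub]
  have hlb' : H t - M * δ / (1 - δ) ≤ (∫ u in ((1 - δ) * t)..t, H u) / (δ * t) := by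
    rw [le_div_iff₀ hδt]
    linarith [hlb]
  have hMδ1 : M * δ / (1 - δ) ≤ ε / 2 := by
    have h3 : M * δ / (1 - δ) ≤ M * δ / (1/2) :=
      div_le_div_of_nonneg_left (by positivity) (by norm_num) (by linarith)
    have : M * δ / (1/2) = 2 * (M * δ) := by ring
    linarith [hδM]
  have habs1 := abs_lt.mp hup
  have habs2 := abs_lt.mp hlo
  rw [abs_lt]
  constructor
  · -- -ε < H t - ℓ
    have : (∫ u in t..((1 + δ) * t), H u) / (δ * t) - ℓ > -(ε/2) := habs1.1
    linarith [hub', hδM]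
  · have : (∫ u in ((1 - δ) * t)..t, H u) / (δ * t) - ℓ < ε/2 := habs2.2
    linarith [hlb', hMδ1]
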